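/- arXiv:0904.4774 — 6 statements merged into one kernel-verified Lean document; each statement's English description precedes it below -/
import Mathlib

section
/- Let D₀ be a d×K real matrix with unit Euclidean-norm columns whose columns span ℝ^d (a complete dictionary), let X₀ be a K×N real matrix, and set Y = D₀·X₀. Assume ‖X₀‖₁ = inf{‖X‖₁ : X is K×N and D₀·X = Y} (X₀ is a minimum ℓ1-norm representation of Y). If either (1) (D₀,X₀) is a local minimum of problem (P1'), or (2) D₀ is a global minimum of D ↦ C₁(D|Y) := inf{‖X‖₁ : D·X = Y} over all d×K matrices D with unit Euclidean-norm columns, then for every k ∈ {1,…,K} and every z ∈ ℝ^{K−1} one has |⟨u_k, z⟩| ≤ ‖X̄_kᵀ z‖₁. -/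
open Matrix Finset MeasureTheory
open scoped ENNReal

noncomputable section

/-- Entrywise ℓ1 norm of a matrix: the sum of absolute values of all entries. -/
def l1Norm {m n : Type*} [Fintype m] [Fintype n] (X : Matrix m n ℝ) : ℝ :=
  ∑ i, ∑ j, |X i j|

/-- The dictionary has unit Euclidean-norm columns. -/
def UnitCols {d K : ℕ} (D : Matrix (Fin d) (Fin K) ℝ) : Prop :=
  ∀ k, ∑ i, (D i k) ^ 2 = 1

/-- `(D₀, X₀)` is a local minimum of problem (P1'): there is a neighbourhood of
`(D₀, X₀)` in which every pair `(D, X)` with `D` having unit columns and `D·X = Y`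
satisfies `‖X‖₁ ≥ ‖X₀‖₁`. -/
def IsLocalMinP1 {d K N : ℕ} (Y : Matrix (Fin d) (Fin N) ℝ)
    (D₀ : Matrix (Fin d) (Fin K) ℝ) (X₀ : Matrix (Fin K) (Fin N) ℝ) : Prop :=
  ∃ U ∈ nhds (D₀, X₀), ∀ DX ∈ U, UnitCols DX.1 → DX.1 * DX.2 = Y →
    l1Norm X₀ ≤ l1Norm DX.2

/-- The ℓ1 cost `C₁(D|Y) = inf {‖X‖₁ : D·X = Y}` (equal to `+∞` if no `X` exists). -/
def C1 {d K N : ℕ} (D : Matrix (Fin d) (Fin K) ℝ) (Y : Matrix (Fin d) (Fin N) ℝ) : ℝ≥0∞ :=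
  ⨅ (X : Matrix (Fin K) (Fin N) ℝ) (_ : D * X = Y), ENNReal.ofReal (l1Norm X)

/-- The vector `u_k = X_k (s^k)ᵀ − diag(‖x^ℓ‖₁)_{ℓ≠k} · m̄_k ∈ ℝ^{K−1}`,
indexed by the rows `ℓ ≠ k`. -/
def uVec {d K N : ℕ} (D₀ : Matrix (Fin d) (Fin K) ℝ) (X₀ : Matrix (Fin K) (Fin N) ℝ)
    (k : Fin K) (l : {l : Fin K // l ≠ k}) : ℝ :=
  (∑ n ∈ Finset.univ.filter fun n => X₀ k n ≠ 0, X₀ l.1 n * Real.sign (X₀ k n))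
    - (∑ n, |X₀ l.1 n|) * (∑ i, D₀ i l.1 * D₀ i k)

/-!
Fix `k` and `z`. Shear the dictionary: for `l ≠ k` replace `a_l` by `a_l - t z_l a_k`,
normalized by `c_l(t) = ‖a_l - t z_l a_k‖`, and compensate by scaling `x^l` by `c_l(t)` and
adding `t w`, `w = ∑_l z_l x^l`, to `x^k`. The product stays `Y`, the columns stay unit, and the
pair depends continuously on `t` with value `(D₀, X₀)` at `t = 0`, so either optimality
hypothesis gives `‖X₀‖₁ ≤ ‖X_t‖₁` for small `t`. On the other hand `c_l(t) ≤ 1 - t z_l m_l + O(t²)`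
(as `√q ≤ (1 + q)/2`), and for small `t` the sign of `x^k + t w` agrees with that of `x^k` on its
support, so `‖X_t‖₁ ≤ ‖X₀‖₁ + t ⟨u_k, z⟩ + |t| ‖X̄_kᵀ z‖₁ + O(t²)`. Letting `t → 0±` gives
`±⟨u_k, z⟩ ≤ ‖X̄_kᵀ z‖₁`.
-/

open Filter Topology

lemma abs_add_eq_add_mul_sign {x y : ℝ} (hx : x ≠ 0) (hxy : |y| ≤ |x|) :
    |x + y| = |x| + y * Real.sign x := by
  obtain ⟨hy₁, hy₂⟩ := abs_le.mp hxy
  rcases hx.lt_or_gt with h | h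
  · rw [Real.sign_of_neg h, abs_of_neg h] at *
    rw [abs_of_nonpos (by linarith)]
    ring
  · rw [Real.sign_of_pos h, abs_of_pos h] at *
    rw [abs_of_nonneg (by linarith)]
    ring

lemma eventually_sum_abs_add_mul_eq {ι : Type*} [Fintype ι] (x w : ι → ℝ) :
    ∀ᶠ t in 𝓝 (0 : ℝ), ∑ n, |x n + t * w n| =
      ∑ n, |x n| + t * ∑ n ∈ univ.filter (fun n => x n ≠ 0), w n * Real.sign (x n)
        + |t| * ∑ n ∈ univ.filter (fun n => x n = 0), |w n| := by
  have hsmall : ∀ᶠ t in 𝓝 (0 : ℝ), ∀ n ∈ univ.filter (fun n => x n ≠ 0), |t * w n| ≤ |x n| := by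
    rw [eventually_all_finset]
    intro n hn
    have hlim : Tendsto (fun t : ℝ => |t * w n|) (𝓝 0) (𝓝 0) :=
      (by fun_prop : Continuous fun t : ℝ => |t * w n|).tendsto' 0 0 (by simp)
    exact (hlim.eventually_lt_const (abs_pos.mpr (mem_filter.mp hn).2)).mono fun _ => le_of_lt
  filter_upwards [hsmall] with t ht
  have hsupp : ∑ n ∈ univ.filter (fun n => x n ≠ 0), |x n + t * w n|
      = ∑ n, |x n| + t * ∑ n ∈ univ.filter (fun n => x n ≠ 0), w n * Real.sign (x n) := by
    rw [sum_congr rfl fun n hn => abs_add_eq_add_mul_sign (mem_filter.mp hn).2 (ht n hn),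
      sum_add_distrib, mul_sum, sum_filter_of_ne fun n _ => abs_ne_zero.mp]
    simp only [mul_assoc]
  have hzero : ∑ n ∈ univ.filter (fun n => ¬x n ≠ 0), |x n + t * w n|
      = |t| * ∑ n ∈ univ.filter (fun n => x n = 0), |w n| := by
    simp only [not_not, mul_sum]
    exact sum_congr rfl fun n hn => by rw [(mem_filter.mp hn).2, zero_add, abs_mul]
  rw [← sum_filter_add_sum_filter_not univ (fun n => x n ≠ 0), hsupp, hzero]

lemma abs_le_of_eventually_nonneg {a b c : ℝ}
    (h : ∀ᶠ t in 𝓝 (0 : ℝ), 0 ≤ t * a + |t| * b + t ^ 2 * c) : |a| ≤ b := by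
  have hneg : ∀ᶠ t in 𝓝 (0 : ℝ), 0 ≤ -t * a + |-t| * b + (-t) ^ 2 * c :=
    (continuous_neg.tendsto' 0 0 neg_zero).eventually h
  have hbound : ∀ᶠ s in 𝓝[>] (0 : ℝ), |a| ≤ b + s * c := by
    filter_upwards [nhdsWithin_le_nhds h, nhdsWithin_le_nhds hneg, self_mem_nhdsWithin]
      with s h₁ h₂ (hs : 0 < s)
    rw [abs_of_pos hs] at h₁
    rw [abs_neg, abs_of_pos hs] at h₂
    exact abs_le.mpr ⟨by nlinarith, by nlinarith⟩
  have hlim : Tendsto (fun s => b + s * c) (𝓝[>] 0) (𝓝 b) :=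
    ((by fun_prop : Continuous fun s : ℝ => b + s * c).tendsto' 0 b (by simp)).mono_left
      nhdsWithin_le_nhds
  exact ge_of_tendsto hlim hbound

lemma l1Norm_nonneg {m n : Type*} [Fintype m] [Fintype n] (X : Matrix m n ℝ) :
    0 ≤ l1Norm X :=
  sum_nonneg fun _ _ => sum_nonneg fun _ _ => abs_nonneg _

lemma l1Norm_le_of_C1_le {d K N : ℕ} {D₀ D : Matrix (Fin d) (Fin K) ℝ}
    {X₀ X : Matrix (Fin K) (Fin N) ℝ} {Y : Matrix (Fin d) (Fin N) ℝ}
    (hminrep : ∀ X : Matrix (Fin K) (Fin N) ℝ, D₀ * X = Y → l1Norm X₀ ≤ l1Norm X)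
    (hC : C1 D₀ Y ≤ C1 D Y) (hX : D * X = Y) : l1Norm X₀ ≤ l1Norm X := by
  have hle : ENNReal.ofReal (l1Norm X₀) ≤ ENNReal.ofReal (l1Norm X) :=
    calc ENNReal.ofReal (l1Norm X₀)
        ≤ C1 D₀ Y := le_iInf₂ fun X' hX' => ENNReal.ofReal_le_ofReal (hminrep X' hX')
      _ ≤ C1 D Y := hC
      _ ≤ ENNReal.ofReal (l1Norm X) := iInf₂_le X hX
  exact (ENNReal.ofReal_le_ofReal_iff (l1Norm_nonneg X)).mp hle

lemma l1Norm_eq_add_sum_subtype_ne {K N : ℕ} (X : Matrix (Fin K) (Fin N) ℝ) (k : Fin K) :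
    l1Norm X = ∑ n, |X k n| + ∑ l : {l : Fin K // l ≠ k}, ∑ n, |X l n| :=
  Fintype.sum_eq_add_sum_subtype_ne _ k

lemma Real.sqrt_le_one_add_div_two {q : ℝ} (hq : 0 ≤ q) : √q ≤ (1 + q) / 2 := by
  nlinarith [Real.sq_sqrt hq, sq_nonneg (√q - 1)]

section Shear

variable {d K N : ℕ} (D : Matrix (Fin d) (Fin K) ℝ) (X : Matrix (Fin K) (Fin N) ℝ)
  (k : Fin K) (z : {l : Fin K // l ≠ k} → ℝ)

def shearColNorm (t : ℝ) (l : {l : Fin K // l ≠ k}) : ℝ :=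
  √(∑ i, (D i l - t * z l * D i k) ^ 2)

def shearDict (t : ℝ) : Matrix (Fin d) (Fin K) ℝ := fun i j =>
  if h : j = k then D i k else (D i j - t * z ⟨j, h⟩ * D i k) / shearColNorm D k z t ⟨j, h⟩

def shearCoef (t : ℝ) : Matrix (Fin K) (Fin N) ℝ := fun j n =>
  if h : j = k then X k n + t * ∑ l : {l : Fin K // l ≠ k}, X l n * z l
  else shearColNorm D k z t ⟨j, h⟩ * X j n

lemma shearDict_apply_self (t : ℝ) (i : Fin d) : shearDict D k z t i k = D i k := dif_pos rfl

lemma shearCoef_apply_self (t : ℝ) (n : Fin N) :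
    shearCoef D X k z t k n = X k n + t * ∑ l : {l : Fin K // l ≠ k}, X l n * z l := dif_pos rfl

lemma shearDict_mul_shearCoef {t : ℝ} (ht : ∀ l, shearColNorm D k z t l ≠ 0) :
    shearDict D k z t * shearCoef D X k z t = D * X := by
  ext i n
  simp only [mul_apply]
  rw [Fintype.sum_eq_add_sum_subtype_ne _ k, Fintype.sum_eq_add_sum_subtype_ne _ k]
  have hcol : ∀ l : {l : Fin K // l ≠ k}, shearDict D k z t i l * shearCoef D X k z t l n
      = D i l * X l n - t * D i k * (X l n * z l) := fun l => by
    simp only [shearDict, shearCoef, dif_neg l.2]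
    field_simp [ht l]
  rw [sum_congr rfl fun l _ => hcol l, sum_sub_distrib, ← mul_sum, shearDict_apply_self,
    shearCoef_apply_self]
  ring

variable {D}

lemma sum_sq_sub_mul_eq_of_unitCols (hD : UnitCols D) (t : ℝ) (l : {l : Fin K // l ≠ k}) :
    ∑ i, (D i l - t * z l * D i k) ^ 2
      = 1 - 2 * t * z l * ∑ i, D i l * D i k + t ^ 2 * z l ^ 2 := by
  have hexp : ∀ i, (D i l - t * z l * D i k) ^ 2
      = D i l ^ 2 - 2 * t * z l * (D i l * D i k) + t ^ 2 * z l ^ 2 * D i k ^ 2 := fun i => by ring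
  rw [sum_congr rfl fun i _ => hexp i, sum_add_distrib, sum_sub_distrib, ← mul_sum, ← mul_sum,
    hD l, hD k, mul_one]

lemma unitCols_shearDict (hD : UnitCols D) {t : ℝ} (ht : ∀ l, shearColNorm D k z t l ≠ 0) :
    UnitCols (shearDict D k z t) := by
  intro j
  by_cases hj : j = k
  · simpa only [shearDict, dif_pos hj] using hD k
  · have hc := ht ⟨j, hj⟩
    have hsq : shearColNorm D k z t ⟨j, hj⟩ ^ 2 = ∑ i, (D i j - t * z ⟨j, hj⟩ * D i k) ^ 2 :=
      Real.sq_sqrt (sum_nonneg fun _ _ => sq_nonneg _)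
    simp only [shearDict, dif_neg hj, div_pow, ← sum_div, ← hsq]
    exact div_self (pow_ne_zero 2 hc)

lemma shearColNorm_zero (hD : UnitCols D) (l : {l : Fin K // l ≠ k}) :
    shearColNorm D k z 0 l = 1 := by
  simp [shearColNorm, hD l]

lemma shearDict_zero (hD : UnitCols D) : shearDict D k z 0 = D := by
  ext i j
  by_cases hj : j = k
  · subst hj; simp [shearDict]
  · simp [shearDict, dif_neg hj, shearColNorm_zero k z hD]

lemma shearCoef_zero (hD : UnitCols D) : shearCoef D X k z 0 = X := by
  ext j n
  by_cases hj : j = k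
  · subst hj; simp [shearCoef]
  · simp [shearCoef, dif_neg hj, shearColNorm_zero k z hD]

lemma continuous_shearColNorm (l : {l : Fin K // l ≠ k}) :
    Continuous fun t => shearColNorm D k z t l := by
  unfold shearColNorm
  fun_prop

lemma eventually_shearColNorm_pos (hD : UnitCols D) :
    ∀ᶠ t in 𝓝 (0 : ℝ), ∀ l, 0 < shearColNorm D k z t l := by
  rw [eventually_all]
  intro l
  refine ((continuous_shearColNorm k z l).tendsto' 0 1 ?_).eventually_const_lt one_pos
  exact shearColNorm_zero k z hD l

lemma continuousAt_shear (hD : UnitCols D) :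
    ContinuousAt (fun t => (shearDict D k z t, shearCoef D X k z t)) 0 := by
  have hc := continuous_shearColNorm (D := D) k z
  refine ContinuousAt.prodMk ?_ ?_ <;>
    refine continuousAt_pi.2 fun a => continuousAt_pi.2 fun b => ?_
  · by_cases hb : b = k
    · simp only [shearDict, dif_pos hb]; exact continuousAt_const
    · simp only [shearDict, dif_neg hb]
      exact ContinuousAt.div (by fun_prop) (hc _).continuousAt
        (by rw [shearColNorm_zero k z hD]; exact one_ne_zero)
  · by_cases ha : a = k
    · simp only [shearCoef, dif_pos ha]; fun_prop
    · simp only [shearCoef, dif_neg ha]; exact ((hc _).mul continuous_const).continuousAt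

lemma shearColNorm_le (hD : UnitCols D) (t : ℝ) (l : {l : Fin K // l ≠ k}) :
    shearColNorm D k z t l ≤ 1 - t * z l * ∑ i, D i l * D i k + t ^ 2 * z l ^ 2 / 2 := by
  calc shearColNorm D k z t l ≤ (1 + ∑ i, (D i l - t * z l * D i k) ^ 2) / 2 :=
        Real.sqrt_le_one_add_div_two (sum_nonneg fun _ _ => sq_nonneg _)
    _ = _ := by rw [sum_sq_sub_mul_eq_of_unitCols k z hD]; ring

lemma l1Norm_shearCoef {t : ℝ} (ht : ∀ l, 0 ≤ shearColNorm D k z t l) :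
    l1Norm (shearCoef D X k z t) = ∑ n, |X k n + t * ∑ l : {l : Fin K // l ≠ k}, X l n * z l|
      + ∑ l : {l : Fin K // l ≠ k}, shearColNorm D k z t l * ∑ n, |X l n| := by
  rw [l1Norm_eq_add_sum_subtype_ne _ k]
  congr 1
  · simp only [shearCoef_apply_self]
  · refine sum_congr rfl fun l _ => ?_
    simp only [shearCoef, dif_neg l.2, abs_mul, abs_of_nonneg (ht l), mul_sum]

lemma sum_uVec_mul_eq :
    ∑ l, uVec D X k l * z l =
      ∑ n ∈ univ.filter (fun n => X k n ≠ 0),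
          (∑ l : {l : Fin K // l ≠ k}, X l n * z l) * Real.sign (X k n)
        - ∑ l : {l : Fin K // l ≠ k}, z l * (∑ i, D i l * D i k) * ∑ n, |X l n| := by
  simp only [uVec, sub_mul]
  rw [sum_sub_distrib]
  congr 1
  · simp only [sum_mul]
    rw [sum_comm]
    exact sum_congr rfl fun n _ => sum_congr rfl fun l _ => by ring
  · exact sum_congr rfl fun l _ => by ring

lemma eventually_l1Norm_shearCoef_le (hD : UnitCols D) :
    ∀ᶠ t in 𝓝 (0 : ℝ), l1Norm (shearCoef D X k z t) ≤ l1Norm X + t * ∑ l, uVec D X k l * z l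
      + |t| * ∑ n ∈ univ.filter (fun n => X k n = 0), |∑ l : {l : Fin K // l ≠ k}, X l n * z l|
      + t ^ 2 * ((∑ l : {l : Fin K // l ≠ k}, z l ^ 2 * ∑ n, |X l n|) / 2) := by
  filter_upwards [eventually_shearColNorm_pos k z hD,
    eventually_sum_abs_add_mul_eq (X k) fun n => ∑ l : {l : Fin K // l ≠ k}, X l n * z l]
    with t hpos hrow
  have hnrm : ∀ l : {l : Fin K // l ≠ k}, 0 ≤ ∑ n, |X l n| :=
    fun _ => sum_nonneg fun _ _ => abs_nonneg _
  have hcols : ∑ l : {l : Fin K // l ≠ k}, shearColNorm D k z t l * ∑ n, |X l n|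
      ≤ ∑ l : {l : Fin K // l ≠ k}, ∑ n, |X l n|
        - t * ∑ l : {l : Fin K // l ≠ k}, z l * (∑ i, D i l * D i k) * ∑ n, |X l n|
        + t ^ 2 * ((∑ l : {l : Fin K // l ≠ k}, z l ^ 2 * ∑ n, |X l n|) / 2) := by
    calc _ ≤ ∑ l : {l : Fin K // l ≠ k},
            (1 - t * z l * ∑ i, D i l * D i k + t ^ 2 * z l ^ 2 / 2) * ∑ n, |X l n| :=
          sum_le_sum fun l _ => mul_le_mul_of_nonneg_right (shearColNorm_le k z hD t l) (hnrm l)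
      _ = _ := by
          rw [sum_congr rfl fun l _ => (by ring : (1 - t * z l * ∑ i, D i l * D i k
              + t ^ 2 * z l ^ 2 / 2) * ∑ n, |X l n| = ∑ n, |X l n|
              - t * (z l * (∑ i, D i l * D i k) * ∑ n, |X l n|)
              + t ^ 2 * (z l ^ 2 * ∑ n, |X l n|) / 2),
            sum_add_distrib, sum_sub_distrib, ← mul_sum, ← sum_div, ← mul_sum]
          ring
  rw [l1Norm_shearCoef X k z fun l => (hpos l).le, hrow, l1Norm_eq_add_sum_subtype_ne X k,
    sum_uVec_mul_eq]
  linarith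

end Shear

theorem stmt0_general {d K N : ℕ} (D₀ : Matrix (Fin d) (Fin K) ℝ)
    (X₀ : Matrix (Fin K) (Fin N) ℝ) (Y : Matrix (Fin d) (Fin N) ℝ)
    (hY : Y = D₀ * X₀)
    (hunit : UnitCols D₀)
    (hminrep : ∀ X : Matrix (Fin K) (Fin N) ℝ, D₀ * X = Y → l1Norm X₀ ≤ l1Norm X)
    (h : IsLocalMinP1 Y D₀ X₀ ∨
      (∀ D : Matrix (Fin d) (Fin K) ℝ, UnitCols D → C1 D₀ Y ≤ C1 D Y)) :
    ∀ (k : Fin K) (z : {l : Fin K // l ≠ k} → ℝ),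
      |∑ l, uVec D₀ X₀ k l * z l| ≤
        ∑ n ∈ Finset.univ.filter fun n => X₀ k n = 0,
          |∑ l : {l : Fin K // l ≠ k}, X₀ l.1 n * z l| := by
  intro k z
  have hadm : ∀ᶠ t in 𝓝 (0 : ℝ),
      UnitCols (shearDict D₀ k z t) ∧ shearDict D₀ k z t * shearCoef D₀ X₀ k z t = Y :=
    (eventually_shearColNorm_pos k z hunit).mono fun t ht =>
      ⟨unitCols_shearDict k z hunit fun l => (ht l).ne',
        hY ▸ shearDict_mul_shearCoef D₀ X₀ k z fun l => (ht l).ne'⟩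
  have hopt : ∀ᶠ t in 𝓝 (0 : ℝ), l1Norm X₀ ≤ l1Norm (shearCoef D₀ X₀ k z t) := by
    rcases h with ⟨U, hU, hUP⟩ | hglob
    · have hnear := (continuousAt_shear X₀ k z hunit).preimage_mem_nhds
        (by rwa [shearDict_zero k z hunit, shearCoef_zero X₀ k z hunit])
      filter_upwards [hnear, hadm] with t htU ⟨hunit_t, hmul_t⟩
      exact hUP _ htU hunit_t hmul_t
    · filter_upwards [hadm] with t ⟨hunit_t, hmul_t⟩
      exact l1Norm_le_of_C1_le hminrep (hglob _ hunit_t) hmul_t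
  refine abs_le_of_eventually_nonneg
    (c := (∑ l : {l : Fin K // l ≠ k}, z l ^ 2 * ∑ n, |X₀ l n|) / 2) ?_
  filter_upwards [hopt, eventually_l1Norm_shearCoef_le X₀ k z hunit] with t hlow hup
  linarith

/-- **Necessary condition (Theorem NC).** If `(D₀,X₀)` is a local minimum of (P1'),
or `D₀` is a global minimum of `D ↦ C₁(D|Y)` over unit-column dictionaries, then
for every `k` and every `z ∈ ℝ^{K−1}`, `|⟨u_k, z⟩| ≤ ‖X̄_kᵀ z‖₁`. -/
theorem stmt0 {d K N : ℕ} (D₀ : Matrix (Fin d) (Fin K) ℝ)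
    (X₀ : Matrix (Fin K) (Fin N) ℝ) (Y : Matrix (Fin d) (Fin N) ℝ)
    (hY : Y = D₀ * X₀)
    (hunit : UnitCols D₀)
    (hcomplete : Submodule.span ℝ (Set.range fun k => (fun i => D₀ i k)) = ⊤)
    (hminrep : ∀ X : Matrix (Fin K) (Fin N) ℝ, D₀ * X = Y → l1Norm X₀ ≤ l1Norm X)
    (h : IsLocalMinP1 Y D₀ X₀ ∨
      (∀ D : Matrix (Fin d) (Fin K) ℝ, UnitCols D → C1 D₀ Y ≤ C1 D Y)) :
    ∀ (k : Fin K) (z : {l : Fin K // l ≠ k} → ℝ),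
      |∑ l, uVec D₀ X₀ k l * z l| ≤
        ∑ n ∈ Finset.univ.filter fun n => X₀ k n = 0,
          |∑ l : {l : Fin K // l ≠ k}, X₀ l.1 n * z l| :=
  stmt0_general D₀ X₀ Y hY hunit hminrep h
end
end

section
/- Let D₀ be a d×K real matrix each of whose columns has unit Euclidean norm, and set M₀ := D₀ᵀD₀ − I. A K×K real matrix C satisfies diag(D₀ᵀ·D₀·C) = 0 (i.e. D₀·C is tangent at D₀ to the manifold of matrices with unit-norm columns) if and only if there exists a K×K matrix Z with zero diagonal such that C = Z − diag(M₀·Z). -/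
open Matrix

/-- **Lemma (tangent space of the unit-column manifold).** For `D₀` with unit
Euclidean-norm columns and `M₀ := D₀ᵀD₀ − I`, a `K×K` matrix `C` satisfies
`diag(D₀ᵀ·D₀·C) = 0` (i.e. `D₀·C` is tangent at `D₀` to the manifold of unit-column
matrices) if and only if `C = Z − diag(M₀·Z)` for some zero-diagonal matrix `Z`. -/
theorem stmt5 {d K : ℕ} (D₀ : Matrix (Fin d) (Fin K) ℝ)
    (hunit : ∀ k, ∑ i, (D₀ i k) ^ 2 = 1)
    (C : Matrix (Fin K) (Fin K) ℝ) :
    (∀ k, (D₀ᵀ * D₀ * C) k k = 0) ↔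
      ∃ Z : Matrix (Fin K) (Fin K) ℝ, (∀ k, Z k k = 0) ∧
        C = Z - Matrix.diagonal (fun k => (((D₀ᵀ * D₀ - 1 : Matrix (Fin K) (Fin K) ℝ) * Z) k k)) := by
  set G := D₀ᵀ * D₀ with hGdef
  have hG : ∀ k, G k k = 1 := by
    intro k
    simp only [hGdef, Matrix.mul_apply, Matrix.transpose_apply]
    simpa [sq] using hunit k
  have hM : ∀ (Z : Matrix (Fin K) (Fin K) ℝ) k,
      ((G - 1 : Matrix (Fin K) (Fin K) ℝ) * Z) k k = (G * Z) k k - Z k k := by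
    intro Z k
    simp [Matrix.sub_mul, Matrix.sub_apply, Matrix.one_mul]
  constructor
  · intro h
    refine ⟨Matrix.of (fun i j => if i = j then 0 else C i j), fun k => by simp, ?_⟩
    ext i j
    set Z : Matrix (Fin K) (Fin K) ℝ := Matrix.of (fun i j => if i = j then 0 else C i j)
    have hGZ : ∀ k, (G * Z) k k = - C k k := by
      intro k
      have : (G * Z) k k = (G * C) k k - G k k * C k k := by
        simp only [Matrix.mul_apply]
        have step : ∀ j, G k j * Z j k
            = G k j * C j k - (if j = k then G k k * C k k else 0) := by
          intro j
          by_cases hj : j = k <;> simp [Z, hj]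
        rw [Finset.sum_congr rfl (fun j _ => step j), Finset.sum_sub_distrib,
          Finset.sum_ite_eq' Finset.univ k (fun _ => G k k * C k k)]
        simp
      rw [this, h k, hG k]
      ring
    by_cases hij : i = j
    · subst hij
      simp [Matrix.sub_apply, Matrix.diagonal_apply_eq, hM, hGZ, Z]
    · simp [Matrix.sub_apply, Matrix.diagonal_apply_ne _ hij, Z, hij]
  · rintro ⟨Z, hZ, rfl⟩
    intro k
    have : (G * (Z - Matrix.diagonal fun k => ((G - 1 : Matrix (Fin K) (Fin K) ℝ) * Z) k k)) k k
        = (G * Z) k k - G k k * ((G - 1 : Matrix (Fin K) (Fin K) ℝ) * Z) k k := by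
      rw [Matrix.mul_sub, Matrix.sub_apply]
      congr 1
      simp [Matrix.mul_apply, Matrix.diagonal_apply, Finset.sum_eq_single k, mul_comm]
    rw [this, hG k, hM Z k, hZ k]
    ring
end

section
/- Let D₀ be a d×K real matrix with unit Euclidean-norm columns whose columns span ℝ^d (so the linear map D₀ : ℝ^K → ℝ^d is surjective), and let X₀ be a K×N real matrix. A pair of matrices (D', X') (of sizes d×K and K×N) satisfies diag(D₀ᵀ·D') = 0 and D'·X₀ + D₀·X' = 0 (i.e. lies in the tangent space at (D₀,X₀) to the constraint manifold {(D,X) : D has unit-norm columns, D·X = D₀·X₀}) if and only if there exist a K×K matrix C with diag(D₀ᵀ·D₀·C) = 0 and a K×N matrix V with D₀·V = 0 such that D' = D₀·C and X' = −C·X₀ + V. -/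
open Matrix

/-- A surjective matrix has a right inverse. -/
lemma exists_right_inverse_aux {d K : ℕ} (D₀ : Matrix (Fin d) (Fin K) ℝ)
    (hcomplete : Function.Surjective D₀.mulVec) :
    ∃ P : Matrix (Fin K) (Fin d) ℝ, D₀ * P = 1 := by
  have hsurj : Function.Surjective D₀.mulVecLin := hcomplete
  obtain ⟨g, hg⟩ := D₀.mulVecLin.exists_rightInverse_of_surjective
    (LinearMap.range_eq_top.2 hsurj)
  have hg' : ∀ v, D₀ *ᵥ g v = v := fun v => congrFun (congrArg DFunLike.coe hg) v
  refine ⟨LinearMap.toMatrix' g, ?_⟩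
  have key : ∀ v, (D₀ * LinearMap.toMatrix' g) *ᵥ v = v := by
    intro v
    rw [← mulVec_mulVec]
    have : LinearMap.toMatrix' g *ᵥ v = g v := by
      rw [← Matrix.toLin'_apply, Matrix.toLin'_toMatrix']
    rw [this]; exact hg' v
  ext i j
  have := congrFun (key (Pi.single j 1)) i
  simp only [mulVec_single, one_apply, Pi.single_apply] at this ⊢
  simpa [eq_comm] using this

/-- **Lemma (tangent space of the constraint manifold).** For a complete dictionary
`D₀` (unit columns, columns spanning `ℝ^d`, i.e. `D₀ : ℝ^K → ℝ^d` surjective), a pair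
`(D', X')` satisfies `diag(D₀ᵀ·D') = 0` and `D'·X₀ + D₀·X' = 0` if and only if
`D' = D₀·C` and `X' = −C·X₀ + V` for some matrix `C` with `diag(D₀ᵀ·D₀·C) = 0`
(an admissible matrix) and some `V` in the null space of `D₀`. -/
theorem stmt6 {d K N : ℕ} (D₀ : Matrix (Fin d) (Fin K) ℝ)
    (hunit : ∀ k, ∑ i, (D₀ i k) ^ 2 = 1)
    (hcomplete : Function.Surjective D₀.mulVec)
    (X₀ : Matrix (Fin K) (Fin N) ℝ)
    (D' : Matrix (Fin d) (Fin K) ℝ) (X' : Matrix (Fin K) (Fin N) ℝ) :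
    ((∀ k, (D₀ᵀ * D') k k = 0) ∧ D' * X₀ + D₀ * X' = 0) ↔
      ∃ (C : Matrix (Fin K) (Fin K) ℝ) (V : Matrix (Fin K) (Fin N) ℝ),
        (∀ k, (D₀ᵀ * D₀ * C) k k = 0) ∧ D₀ * V = 0 ∧
          D' = D₀ * C ∧ X' = -(C * X₀) + V := by
  constructor
  · rintro ⟨hdiag, htan⟩
    obtain ⟨P, hP⟩ := exists_right_inverse_aux D₀ hcomplete
    refine ⟨P * D', X' + P * D' * X₀, ?_, ?_, ?_, ?_⟩
    · intro k
      have : D₀ᵀ * D₀ * (P * D') = D₀ᵀ * D' := by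
        calc D₀ᵀ * D₀ * (P * D') = D₀ᵀ * (D₀ * P * D') := by
              simp [Matrix.mul_assoc]
          _ = D₀ᵀ * D' := by rw [hP, Matrix.one_mul]
      rw [this]; exact hdiag k
    · have : D₀ * (X' + P * D' * X₀) = D₀ * X' + D₀ * P * D' * X₀ := by
        simp [Matrix.mul_add, Matrix.mul_assoc]
      rw [this, hP, Matrix.one_mul]
      rw [add_comm] at htan
      exact htan
    · calc D' = 1 * D' := (Matrix.one_mul D').symm
        _ = D₀ * P * D' := by rw [hP]
        _ = D₀ * (P * D') := by rw [Matrix.mul_assoc]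
    · abel
  · rintro ⟨C, V, hC, hV, hD, hX⟩
    refine ⟨?_, ?_⟩
    · intro k
      rw [hD, ← Matrix.mul_assoc]
      exact hC k
    · rw [hD, hX]
      have : D₀ * (-(C * X₀) + V) = -(D₀ * C * X₀) + D₀ * V := by
        simp [Matrix.mul_add, Matrix.mul_assoc]
      rw [this, hV]
      abel
end

section
/- Let D₀ be a d×K real matrix with unit Euclidean-norm columns whose columns span ℝ^d, let X₀ be a K×N real matrix, Y = D₀·X₀, M₀ := D₀ᵀD₀ − I, and define the K×K matrix U := sign(X₀)·X₀ᵀ − M₀ᵀ·diag(‖x^k‖₁)_{k=1,…,K}. If there exist a K×K zero-diagonal matrix Z and a K×N matrix V with D₀·V = 0 such that Z·X₀ + V ≠ 0 and |⟨Z, U⟩_F + ⟨V, sign(X₀)⟩_F| > ‖(Z·X₀ + V)_Λ‖₁, then (D₀,X₀) is NOT a local minimum of problem (P1'). -/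
open Matrix Finset

noncomputable section

/-- Entrywise sign of a matrix (with `sign 0 = 0`). -/
def signM {m n : Type*} (X : Matrix m n ℝ) : Matrix m n ℝ :=
  Matrix.of fun i j => Real.sign (X i j)

/-- Frobenius inner product `⟨A, B⟩_F = trace(Aᵀ B)`. -/
def frob {m n : Type*} [Fintype m] [Fintype n] (A B : Matrix m n ℝ) : ℝ :=
  Matrix.trace (Aᵀ * B)

/-- `‖A_Λ‖₁`: the ℓ1 norm of `A` restricted to the indices where `X₀` vanishes. -/
def l1OnZeros {K N : ℕ} (X₀ A : Matrix (Fin K) (Fin N) ℝ) : ℝ :=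
  ∑ k, ∑ n, if X₀ k n = 0 then |A k n| else 0

/-- The matrix `U := sign(X₀)·X₀ᵀ − M₀ᵀ·diag(‖x^k‖₁)_k`, where `M₀ = D₀ᵀD₀ − I`. -/
def Umatrix {d K N : ℕ} (D₀ : Matrix (Fin d) (Fin K) ℝ)
    (X₀ : Matrix (Fin K) (Fin N) ℝ) : Matrix (Fin K) (Fin K) ℝ :=
  signM X₀ * X₀ᵀ - (D₀ᵀ * D₀ - 1)ᵀ * Matrix.diagonal (fun k => ∑ n, |X₀ k n|)

/-!
Move along the curve `t ↦ (D(t), X(t))` with `D(t) = D₀ (1 - t Z) diag(c(t))⁻¹` and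
`X(t) = diag(c(t)) (1 - t Z)⁻¹ (X₀ + t V)`, where `c(t)` are the column norms of `D₀ (1 - t Z)`.
Because `D₀ V = 0` the curve stays in `S(Y)`, and it starts at `(D₀, X₀)`. Writing
`X(t) = X₀ + t H(t)` with `H` continuous at `0`, for small `t > 0` one has
`‖X(t)‖₁ ≤ ‖X₀‖₁ + t (⟨sign X₀, H(t)⟩ + ‖H(t)_Λ‖₁)`. Since `c'(0) = -diag(D₀ᵀ D₀ Z)` and `Z`
has zero diagonal, the bracket at `t = 0` equals `⟨Z, U⟩ + ⟨V, sign X₀⟩ + ‖(Z X₀ + V)_Λ‖₁`; when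
this is negative, `X(t)` has smaller `ℓ¹` norm than `X₀` arbitrarily close to `(D₀, X₀)`.
Replacing `(Z, V)` by `(-Z, -V)` handles the other sign of the absolute value.
-/

open Filter Topology

theorem Real.sign_mul_self_eq_abs (x : ℝ) : Real.sign x * x = |x| := by
  rcases lt_trichotomy x 0 with h | rfl | h
  · rw [Real.sign_of_neg h, abs_of_neg h]; ring
  · simp
  · rw [Real.sign_of_pos h, abs_of_pos h]; ring

theorem abs_add_le_abs_add_sign_mul (b a : ℝ) (h : b ≠ 0 → |a| ≤ |b|) :
    |b + a| ≤ |b| + Real.sign b * a + if b = 0 then |a| else 0 := by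
  rcases lt_trichotomy b 0 with hb | rfl | hb
  · have := abs_le.mp (h hb.ne)
    rw [abs_of_neg hb] at this
    rw [Real.sign_of_neg hb, if_neg hb.ne, abs_of_neg hb, abs_of_nonpos (by linarith)]
    linarith
  · simp
  · have := abs_le.mp (h hb.ne')
    rw [abs_of_pos hb] at this
    rw [Real.sign_of_pos hb, if_neg hb.ne', abs_of_pos hb, abs_of_nonneg (by linarith)]
    linarith

theorem Real.sqrt_eq_one_add_mul {t a : ℝ} (h : 0 ≤ 1 + t * a) :
    √(1 + t * a) = 1 + t * (a / (√(1 + t * a) + 1)) := by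
  have hpos : √(1 + t * a) + 1 ≠ 0 := by positivity
  field_simp
  linear_combination Real.sq_sqrt h

theorem frob_eq_sum {m n : Type*} [Fintype m] [Fintype n] (A B : Matrix m n ℝ) :
    frob A B = ∑ i, ∑ j, A i j * B i j := by
  simp only [frob, trace, Matrix.diag, mul_apply, transpose_apply]
  exact Finset.sum_comm

theorem frob_neg_left {m n : Type*} [Fintype m] [Fintype n] (A B : Matrix m n ℝ) :
    frob (-A) B = -frob A B := by
  simp [frob]

theorem continuous_frob {m n : Type*} [Fintype m] [Fintype n] (A : Matrix m n ℝ) :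
    Continuous (frob A) := by
  unfold frob
  fun_prop

theorem frob_comm {m n : Type*} [Fintype m] [Fintype n] (A B : Matrix m n ℝ) :
    frob A B = frob B A := by
  simp only [frob_eq_sum, mul_comm (A _ _)]

theorem frob_sub_right {m n : Type*} [Fintype m] [Fintype n] (A B C : Matrix m n ℝ) :
    frob A (B - C) = frob A B - frob A C := by
  simp [frob, Matrix.mul_sub]

theorem frob_mul_right {l m n : Type*} [Fintype l] [Fintype m] [Fintype n]
    (A : Matrix l n ℝ) (B : Matrix l m ℝ) (C : Matrix m n ℝ) :
    frob A (B * C) = frob B (A * Cᵀ) := by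
  rw [frob, frob, ← trace_transpose, transpose_mul, transpose_mul, transpose_transpose,
    Matrix.mul_assoc, trace_mul_comm, Matrix.mul_assoc]

theorem frob_signM_diagonal_mul {K N : ℕ} (X₀ : Matrix (Fin K) (Fin N) ℝ) (c : Fin K → ℝ) :
    frob (signM X₀) (diagonal c * X₀) = ∑ k, c k * ∑ n, |X₀ k n| := by
  simp only [frob_eq_sum, diagonal_mul, signM, of_apply, mul_sum]
  exact sum_congr rfl fun k _ => sum_congr rfl fun n _ => by
    rw [← Real.sign_mul_self_eq_abs]; ring

theorem frob_transpose_mul_diagonal {n : Type*} [Fintype n] [DecidableEq n]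
    (Z A : Matrix n n ℝ) (c : n → ℝ) :
    frob Z (Aᵀ * diagonal c) = ∑ k, (A * Z) k k * c k := by
  simp only [frob_eq_sum, mul_diagonal, transpose_apply]
  simp only [mul_apply, sum_mul]
  rw [sum_comm]
  exact sum_congr rfl fun k _ => sum_congr rfl fun i _ => by ring

theorem frob_signM_eq_frob_Umatrix_add {d K N : ℕ} (D₀ : Matrix (Fin d) (Fin K) ℝ)
    (X₀ : Matrix (Fin K) (Fin N) ℝ) (Z : Matrix (Fin K) (Fin K) ℝ) (V : Matrix (Fin K) (Fin N) ℝ)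
    (hZ : ∀ k, Z k k = 0) :
    frob (signM X₀) (Z * X₀ + V - diagonal (fun k => (D₀ᵀ * D₀ * Z) k k) * X₀)
      = frob Z (Umatrix D₀ X₀) + frob V (signM X₀) := by
  have hdiag : ∀ k, ((D₀ᵀ * D₀ - 1 : Matrix (Fin K) (Fin K) ℝ) * Z) k k = (D₀ᵀ * D₀ * Z) k k := by
    intro k
    rw [Matrix.sub_mul, Matrix.one_mul, Matrix.sub_apply, hZ, sub_zero]
  rw [frob_sub_right, frob_signM_diagonal_mul, Umatrix, frob_sub_right,
    frob_transpose_mul_diagonal, frob, Matrix.mul_add, trace_add, ← frob, ← frob,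
    frob_mul_right, frob_comm V]
  simp only [hdiag]
  ring

theorem l1OnZeros_neg {K N : ℕ} (X₀ A : Matrix (Fin K) (Fin N) ℝ) :
    l1OnZeros X₀ (-A) = l1OnZeros X₀ A := by
  simp [l1OnZeros]

theorem continuous_l1OnZeros {K N : ℕ} (X₀ : Matrix (Fin K) (Fin N) ℝ) :
    Continuous (l1OnZeros X₀) := by
  refine continuous_finsetSum _ fun k _ => continuous_finsetSum _ fun n _ => ?_
  by_cases h : X₀ k n = 0 <;> simp only [h, if_true, if_false] <;> fun_prop

theorem l1OnZeros_sub_diagonal_mul {K N : ℕ} (X₀ A : Matrix (Fin K) (Fin N) ℝ) (c : Fin K → ℝ) :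
    l1OnZeros X₀ (A - diagonal c * X₀) = l1OnZeros X₀ A := by
  refine sum_congr rfl fun k _ => sum_congr rfl fun n _ => ?_
  split_ifs with hx
  · simp [diagonal_mul, hx]
  · rfl

theorem l1Norm_add_smul_le {K N : ℕ} (X₀ H : Matrix (Fin K) (Fin N) ℝ) {t : ℝ} (ht : 0 ≤ t)
    (hsmall : ∀ k n, X₀ k n ≠ 0 → |t * H k n| ≤ |X₀ k n|) :
    l1Norm (X₀ + t • H) ≤ l1Norm X₀ + t * (frob (signM X₀) H + l1OnZeros X₀ H) := by
  have hzeros : ∀ k n, (if X₀ k n = 0 then |t * H k n| else 0)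
      = t * if X₀ k n = 0 then |H k n| else 0 := by
    intro k n
    rw [abs_mul, abs_of_nonneg ht]
    split_ifs <;> ring
  calc l1Norm (X₀ + t • H)
      ≤ ∑ k, ∑ n, (|X₀ k n| + Real.sign (X₀ k n) * (t * H k n)
          + if X₀ k n = 0 then |t * H k n| else 0) :=
        sum_le_sum fun k _ => sum_le_sum fun n _ =>
          abs_add_le_abs_add_sign_mul _ _ (hsmall k n)
    _ = l1Norm X₀ + t * (frob (signM X₀) H + l1OnZeros X₀ H) := by
        simp only [sum_add_distrib, hzeros, frob_eq_sum, signM, of_apply, l1Norm, l1OnZeros,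
          mul_add, mul_sum, mul_left_comm (Real.sign _) t]
        ring

theorem eventually_l1Norm_add_smul_lt {K N : ℕ} (X₀ : Matrix (Fin K) (Fin N) ℝ)
    {H : ℝ → Matrix (Fin K) (Fin N) ℝ} (hH : ContinuousAt H 0)
    (hneg : frob (signM X₀) (H 0) + l1OnZeros X₀ (H 0) < 0) :
    ∀ᶠ t in 𝓝[>] 0, l1Norm (X₀ + t • H t) < l1Norm X₀ := by
  have hslope : ∀ᶠ t in 𝓝 0, frob (signM X₀) (H t) + l1OnZeros X₀ (H t) < 0 :=
    (((continuous_frob _).add (continuous_l1OnZeros X₀)).continuousAt.comp hH).eventually_lt_const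
      hneg
  have hsmall : ∀ᶠ t in 𝓝 0, ∀ k n, X₀ k n ≠ 0 → |t * H t k n| ≤ |X₀ k n| := by
    simp only [eventually_all]
    intro k n hx
    have hlim : Tendsto (fun t => t * H t k n) (𝓝 0) (𝓝 (0 * H 0 k n)) :=
      tendsto_id.mul ((continuous_apply_apply k n).continuousAt.comp hH)
    rw [zero_mul] at hlim
    exact (hlim.abs.eventually_lt_const (by simpa using hx)).mono fun _ h => h.le
  filter_upwards [self_mem_nhdsWithin, nhdsWithin_le_nhds (hslope.and hsmall)]
    with t (ht : 0 < t) ⟨hneg, hsmall⟩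
  calc l1Norm (X₀ + t • H t)
      ≤ l1Norm X₀ + t * (frob (signM X₀) (H t) + l1OnZeros X₀ (H t)) :=
        l1Norm_add_smul_le X₀ (H t) ht.le hsmall
    _ < l1Norm X₀ := by linarith [mul_neg_of_pos_of_neg ht hneg]

def colNorm {m n : Type*} [Fintype m] (A : Matrix m n ℝ) (k : n) : ℝ :=
  √(∑ i, A i k ^ 2)

theorem unitCols_mul_diagonal_inv_colNorm {d K : ℕ} (A : Matrix (Fin d) (Fin K) ℝ)
    (h : ∀ k, colNorm A k ≠ 0) : UnitCols (A * diagonal fun k => (colNorm A k)⁻¹) := by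
  intro k
  have hsq : colNorm A k ^ 2 = ∑ i, A i k ^ 2 := Real.sq_sqrt (by positivity)
  simp only [mul_diagonal, mul_pow, ← sum_mul, ← hsq, inv_pow]
  exact mul_inv_cancel₀ (pow_ne_zero 2 (h k))

section Path

variable {d K N : ℕ} (D₀ : Matrix (Fin d) (Fin K) ℝ) (X₀ : Matrix (Fin K) (Fin N) ℝ)
  (Z : Matrix (Fin K) (Fin K) ℝ) (V : Matrix (Fin K) (Fin N) ℝ)

def pathScale (t : ℝ) (k : Fin K) : ℝ := colNorm (D₀ * (1 - t • Z)) k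

def pathDict (t : ℝ) : Matrix (Fin d) (Fin K) ℝ :=
  D₀ * (1 - t • Z) * diagonal fun k => (pathScale D₀ Z t k)⁻¹

def pathCoef (t : ℝ) : Matrix (Fin K) (Fin N) ℝ :=
  diagonal (pathScale D₀ Z t) * (1 - t • Z)⁻¹ * (X₀ + t • V)

/-- `(c(t) - 1) / t = (c(t)² - 1) / (t (c(t) + 1))` with the factor `t` cancelled, so that it is
continuous at `0`. -/
def pathScaleSlope (t : ℝ) (k : Fin K) : ℝ :=
  (t * ∑ i, (D₀ * Z) i k ^ 2 - 2 * (D₀ᵀ * D₀ * Z) k k) / (pathScale D₀ Z t k + 1)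

/-- `(X(t) - X₀) / t`, written without division (see `pathCoef_eq_add_smul`). -/
def pathCoefSlope (t : ℝ) : Matrix (Fin K) (Fin N) ℝ :=
  diagonal (pathScaleSlope D₀ Z t) * X₀
    + diagonal (pathScale D₀ Z t) * (V + Z * (1 - t • Z)⁻¹ * (X₀ + t • V))

theorem sum_sq_mul_one_sub_smul (hunit : UnitCols D₀) (t : ℝ) (k : Fin K) :
    ∑ i, (D₀ * (1 - t • Z) : Matrix (Fin d) (Fin K) ℝ) i k ^ 2
      = 1 + t * (t * ∑ i, (D₀ * Z) i k ^ 2 - 2 * (D₀ᵀ * D₀ * Z) k k) := by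
  have hgram : (D₀ᵀ * D₀ * Z) k k = ∑ i, D₀ i k * (D₀ * Z) i k := by
    rw [Matrix.mul_assoc]
    simp [mul_apply]
  simp only [Matrix.mul_sub, Matrix.mul_one, Matrix.mul_smul, Matrix.sub_apply, Matrix.smul_apply,
    smul_eq_mul, hgram, ← hunit k, ← sum_sub_distrib, mul_sum, ← sum_add_distrib]
  exact sum_congr rfl fun i _ => by ring

theorem pathScale_eq_one_add_mul (hunit : UnitCols D₀) (t : ℝ) (k : Fin K) :
    pathScale D₀ Z t k = 1 + t * pathScaleSlope D₀ Z t k := by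
  have h := sum_sq_mul_one_sub_smul D₀ Z hunit t k
  have hnonneg : 0 ≤ 1 + t * (t * ∑ i, (D₀ * Z) i k ^ 2 - 2 * (D₀ᵀ * D₀ * Z) k k) :=
    h ▸ by positivity
  rw [pathScale, pathScaleSlope, pathScale, colNorm, h]
  exact Real.sqrt_eq_one_add_mul hnonneg

theorem pathScale_zero (hunit : UnitCols D₀) : pathScale D₀ Z 0 = 1 := by
  ext k
  simp [pathScale_eq_one_add_mul D₀ Z hunit]

theorem continuous_pathScale (k : Fin K) : Continuous fun t => pathScale D₀ Z t k := by
  unfold pathScale colNorm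
  fun_prop

theorem continuousAt_inv_one_sub_smul : ContinuousAt (fun t : ℝ => (1 - t • Z)⁻¹) 0 := by
  have hinv : ContinuousAt Ring.inverse ((1 - (0 : ℝ) • Z).det) := by
    rw [Ring.inverse_eq_inv']
    exact continuousAt_inv₀ (by simp)
  exact (continuousAt_matrix_inv _ hinv).comp (f := fun t : ℝ => 1 - t • Z) (by fun_prop)

theorem inv_one_sub_smul_eq {t : ℝ} (hdet : IsUnit (1 - t • Z).det) :
    (1 - t • Z)⁻¹ = 1 + t • (Z * (1 - t • Z)⁻¹) := by
  have h := mul_nonsing_inv _ hdet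
  rw [Matrix.sub_mul, Matrix.one_mul, Matrix.smul_mul, sub_eq_iff_eq_add] at h
  exact h

theorem pathCoef_eq_add_smul (hunit : UnitCols D₀) {t : ℝ} (hdet : IsUnit (1 - t • Z).det) :
    pathCoef D₀ X₀ Z V t = X₀ + t • pathCoefSlope D₀ X₀ Z V t := by
  have hscale : diagonal (pathScale D₀ Z t) = 1 + t • diagonal (pathScaleSlope D₀ Z t) := by
    rw [funext (pathScale_eq_one_add_mul D₀ Z hunit t), ← diagonal_one, ← diagonal_smul,
      diagonal_add]
    rfl
  have hinv : (1 - t • Z)⁻¹ * (X₀ + t • V) = X₀ + t • (V + Z * (1 - t • Z)⁻¹ * (X₀ + t • V)) := by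
    conv_lhs => rw [inv_one_sub_smul_eq Z hdet]
    simp only [Matrix.add_mul, Matrix.one_mul, Matrix.smul_mul, Matrix.mul_assoc, smul_add]
    abel
  rw [pathCoef, pathCoefSlope, Matrix.mul_assoc, hinv, hscale]
  simp only [Matrix.add_mul, Matrix.mul_add, Matrix.one_mul, Matrix.smul_mul, Matrix.mul_smul,
    smul_add]
  abel

theorem pathDict_mul_pathCoef (hV : D₀ * V = 0) {t : ℝ} (hdet : IsUnit (1 - t • Z).det)
    (hscale : ∀ k, pathScale D₀ Z t k ≠ 0) :
    pathDict D₀ Z t * pathCoef D₀ X₀ Z V t = D₀ * X₀ := by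
  have hdiag : (diagonal fun k => (pathScale D₀ Z t k)⁻¹) * diagonal (pathScale D₀ Z t) = 1 := by
    rw [diagonal_mul_diagonal, ← diagonal_one]
    exact congrArg diagonal (funext fun k => inv_mul_cancel₀ (hscale k))
  simp only [pathDict, pathCoef, Matrix.mul_assoc]
  rw [← Matrix.mul_assoc (diagonal _), hdiag, Matrix.one_mul, ← Matrix.mul_assoc (1 - t • Z),
    mul_nonsing_inv _ hdet, Matrix.one_mul, Matrix.mul_add, Matrix.mul_smul, hV, smul_zero,
    add_zero]

theorem pathCoefSlope_zero (hunit : UnitCols D₀) :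
    pathCoefSlope D₀ X₀ Z V 0
      = Z * X₀ + V - diagonal (fun k => (D₀ᵀ * D₀ * Z) k k) * X₀ := by
  have hslope : pathScaleSlope D₀ Z 0 = fun k => -(D₀ᵀ * D₀ * Z) k k := by
    ext k
    rw [pathScaleSlope, pathScale_zero D₀ Z hunit]
    simp only [Pi.one_apply]
    ring
  rw [pathCoefSlope, hslope, pathScale_zero D₀ Z hunit, ← diagonal_neg]
  simp only [Pi.one_def, diagonal_one, zero_smul, sub_zero, inv_one, Matrix.mul_one, add_zero,
    Matrix.one_mul, Matrix.neg_mul]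
  abel

theorem eventually_isUnit_det_and_pathScale_ne_zero (hunit : UnitCols D₀) :
    ∀ᶠ t in 𝓝 (0 : ℝ), IsUnit (1 - t • Z).det ∧ ∀ k, pathScale D₀ Z t k ≠ 0 := by
  refine .and ?_ (eventually_all.2 fun k => ?_)
  · have hdet : ContinuousAt (fun t : ℝ => (1 - t • Z).det) 0 := by fun_prop
    exact (hdet.eventually_ne (by simp)).mono fun _ h => isUnit_iff_ne_zero.2 h
  · exact (continuous_pathScale D₀ Z k).continuousAt.eventually_ne
      (by simp [pathScale_zero D₀ Z hunit])

theorem tendsto_pathDict_pathCoef (hunit : UnitCols D₀) :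
    Tendsto (fun t => (pathDict D₀ Z t, pathCoef D₀ X₀ Z V t)) (𝓝 0) (𝓝 (D₀, X₀)) := by
  have hscale : Continuous (pathScale D₀ Z) := continuous_pi (continuous_pathScale D₀ Z)
  have hinv := continuousAt_inv_one_sub_smul Z
  have hD : ContinuousAt (pathDict D₀ Z) 0 := by
    unfold pathDict
    fun_prop (disch := simp [pathScale_zero D₀ Z hunit])
  have hX : ContinuousAt (pathCoef D₀ X₀ Z V) 0 := by
    unfold pathCoef
    fun_prop
  convert hD.prodMk_nhds hX using 2
  simp [pathDict, pathCoef, pathScale_zero D₀ Z hunit]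

theorem continuousAt_pathCoefSlope : ContinuousAt (pathCoefSlope D₀ X₀ Z V) 0 := by
  have hscale := continuous_pathScale D₀ Z
  have hinv := continuousAt_inv_one_sub_smul Z
  have hslope : ContinuousAt (pathScaleSlope D₀ Z) 0 := by
    unfold pathScaleSlope
    fun_prop (disch := simp only [pathScale, colNorm]; positivity)
  unfold pathCoefSlope
  fun_prop

end Path

theorem not_isLocalMinP1_of_frob_add_l1OnZeros_neg {d K N : ℕ} {D₀ : Matrix (Fin d) (Fin K) ℝ}
    {X₀ : Matrix (Fin K) (Fin N) ℝ} {Z : Matrix (Fin K) (Fin K) ℝ} {V : Matrix (Fin K) (Fin N) ℝ}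
    (hunit : UnitCols D₀) (hZ : ∀ k, Z k k = 0) (hV : D₀ * V = 0)
    (hneg : frob Z (Umatrix D₀ X₀) + frob V (signM X₀) + l1OnZeros X₀ (Z * X₀ + V) < 0) :
    ¬ IsLocalMinP1 (D₀ * X₀) D₀ X₀ := by
  rintro ⟨W, hW, hmin⟩
  have hslope : frob (signM X₀) (pathCoefSlope D₀ X₀ Z V 0)
      + l1OnZeros X₀ (pathCoefSlope D₀ X₀ Z V 0) < 0 := by
    rwa [pathCoefSlope_zero D₀ X₀ Z V hunit, frob_signM_eq_frob_Umatrix_add D₀ X₀ Z V hZ,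
      l1OnZeros_sub_diagonal_mul]
  obtain ⟨t, hdesc, ⟨hdet, hscale⟩, hmem⟩ :=
    ((eventually_l1Norm_add_smul_lt X₀ (continuousAt_pathCoefSlope D₀ X₀ Z V) hslope).and
      (nhdsWithin_le_nhds ((eventually_isUnit_det_and_pathScale_ne_zero D₀ Z hunit).and
        (tendsto_pathDict_pathCoef D₀ X₀ Z V hunit hW)))).exists
  have hmin_t : l1Norm X₀ ≤ l1Norm (pathCoef D₀ X₀ Z V t) :=
    hmin _ hmem (unitCols_mul_diagonal_inv_colNorm _ hscale)
      (pathDict_mul_pathCoef D₀ X₀ Z V hV hdet hscale)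
  rw [pathCoef_eq_add_smul D₀ X₀ Z V hunit hdet] at hmin_t
  linarith

theorem stmt8_general {d K N : ℕ} (D₀ : Matrix (Fin d) (Fin K) ℝ)
    (X₀ : Matrix (Fin K) (Fin N) ℝ) (Y : Matrix (Fin d) (Fin N) ℝ)
    (hY : Y = D₀ * X₀)
    (hunit : UnitCols D₀)
    (h : ∃ (Z : Matrix (Fin K) (Fin K) ℝ) (V : Matrix (Fin K) (Fin N) ℝ),
      (∀ k, Z k k = 0) ∧ D₀ * V = 0 ∧ Z * X₀ + V ≠ 0 ∧
        |frob Z (Umatrix D₀ X₀) + frob V (signM X₀)| > l1OnZeros X₀ (Z * X₀ + V)) :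
    ¬ IsLocalMinP1 Y D₀ X₀ := by
  obtain ⟨Z, V, hZ, hV, -, hgt⟩ := h
  subst hY
  rcases le_or_gt (frob Z (Umatrix D₀ X₀) + frob V (signM X₀)) 0 with hle | hpos
  · rw [abs_of_nonpos hle] at hgt
    exact not_isLocalMinP1_of_frob_add_l1OnZeros_neg hunit hZ hV (by linarith)
  · rw [abs_of_pos hpos] at hgt
    refine not_isLocalMinP1_of_frob_add_l1OnZeros_neg (Z := -Z) (V := -V) hunit
      (by simpa using hZ) (by rw [Matrix.mul_neg, hV, neg_zero]) ?_
    rw [Matrix.neg_mul, ← neg_add (Z * X₀), l1OnZeros_neg, frob_neg_left, frob_neg_left]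
    linarith

/-- **Lemma (necessary condition).** If there exist a zero-diagonal `Z` and a `V` with
`D₀·V = 0` such that `Z·X₀ + V ≠ 0` and `|⟨Z,U⟩_F + ⟨V, sign(X₀)⟩_F| > ‖(Z·X₀ + V)_Λ‖₁`,
then `(D₀,X₀)` is NOT a local minimum of (P1'). -/
theorem stmt8 {d K N : ℕ} (D₀ : Matrix (Fin d) (Fin K) ℝ)
    (X₀ : Matrix (Fin K) (Fin N) ℝ) (Y : Matrix (Fin d) (Fin N) ℝ)
    (hY : Y = D₀ * X₀)
    (hunit : UnitCols D₀)
    (hcomplete : Function.Surjective D₀.mulVec)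
    (h : ∃ (Z : Matrix (Fin K) (Fin K) ℝ) (V : Matrix (Fin K) (Fin N) ℝ),
      (∀ k, Z k k = 0) ∧ D₀ * V = 0 ∧ Z * X₀ + V ≠ 0 ∧
        |frob Z (Umatrix D₀ X₀) + frob V (signM X₀)| > l1OnZeros X₀ (Z * X₀ + V)) :
    ¬ IsLocalMinP1 Y D₀ X₀ :=
  stmt8_general D₀ X₀ Y hY hunit h
end
end

section
/- Let D₀ be a d×K real matrix with unit Euclidean-norm columns, X₀ a K×N real matrix, M₀ := D₀ᵀD₀ − I, and U := sign(X₀)·X₀ᵀ − M₀ᵀ·diag(‖x^k‖₁)_{k=1,…,K}. Then for every constant c ≥ 0 the following are equivalent: (i) for every K×K zero-diagonal matrix Z, |⟨Z, U⟩_F| ≤ c·‖(Z·X₀)_Λ‖₁; (ii) for every k ∈ {1,…,K} and every z ∈ ℝ^{K−1}, |⟨u_k, z⟩| ≤ c·‖X̄_kᵀ z‖₁. (Equivalently, sup over nonzero zero-diagonal Z of |⟨Z,U⟩_F|/‖(Z·X₀)_Λ‖₁ equals max_k sup_{z≠0} |⟨u_k,z⟩|/‖X̄_kᵀz‖₁.)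 -/
open Matrix Finset

noncomputable section

lemma frob_eq {K : Type*} [Fintype K] (A B : Matrix K K ℝ) :
    frob A B = ∑ k, ∑ l, A k l * B k l := by
  unfold frob Matrix.trace
  simp only [Matrix.diag, Matrix.mul_apply, Matrix.transpose_apply]
  exact Finset.sum_comm

lemma sum_ne_eq {K : Type*} [Fintype K] [DecidableEq K] (k : K) (f : K → ℝ)
    (hf : f k = 0) : ∑ l, f l = ∑ l : {l : K // l ≠ k}, f l.1 := by
  rw [← Finset.sum_filter_of_ne (p := fun l => l ≠ k)
      (fun x _ hx => by rintro rfl; exact hx hf)]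
  exact Finset.sum_subtype _ (by simp) _

lemma Umatrix_apply_ne {d K N : ℕ} (D₀ : Matrix (Fin d) (Fin K) ℝ)
    (X₀ : Matrix (Fin K) (Fin N) ℝ) (k : Fin K) (l : {l : Fin K // l ≠ k}) :
    Umatrix D₀ X₀ k l.1 = uVec D₀ X₀ k l := by
  have h1 : (1 : Matrix (Fin K) (Fin K) ℝ) l.1 k = 0 := Matrix.one_apply_ne l.2
  unfold Umatrix uVec
  rw [Matrix.sub_apply, Matrix.mul_diagonal, Matrix.transpose_apply,
    Matrix.sub_apply, h1, sub_zero]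
  congr 1
  · rw [Finset.sum_filter_of_ne (fun n _ h => by
      intro h0
      apply h
      rw [h0, Real.sign_zero, mul_zero])]
    simp only [Matrix.mul_apply, Matrix.transpose_apply, signM, Matrix.of_apply]
    exact Finset.sum_congr rfl fun n _ => mul_comm _ _
  · rw [Matrix.mul_apply]
    simp only [Matrix.transpose_apply]
    ring

/-- **Lemma (decoupling).** For every `c ≥ 0`: the global condition
`|⟨Z,U⟩_F| ≤ c·‖(Z·X₀)_Λ‖₁` for all zero-diagonal `Z` is equivalent to the rowwise
condition `|⟨u_k, z⟩| ≤ c·‖X̄_kᵀ z‖₁` for all `k` and all `z ∈ ℝ^{K−1}`. -/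
theorem stmt9 {d K N : ℕ} (D₀ : Matrix (Fin d) (Fin K) ℝ)
    (X₀ : Matrix (Fin K) (Fin N) ℝ)
    (hunit : ∀ k, ∑ i, (D₀ i k) ^ 2 = 1)
    (c : ℝ) (hc : 0 ≤ c) :
    (∀ Z : Matrix (Fin K) (Fin K) ℝ, (∀ k, Z k k = 0) →
        |frob Z (Umatrix D₀ X₀)| ≤ c * l1OnZeros X₀ (Z * X₀)) ↔
      (∀ (k : Fin K) (z : {l : Fin K // l ≠ k} → ℝ),
        |∑ l, uVec D₀ X₀ k l * z l| ≤
          c * ∑ n ∈ Finset.univ.filter fun n => X₀ k n = 0,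
            |∑ l : {l : Fin K // l ≠ k}, X₀ l.1 n * z l|) := by
  classical
  have key1 : ∀ Z : Matrix (Fin K) (Fin K) ℝ, (∀ k, Z k k = 0) →
      frob Z (Umatrix D₀ X₀) =
        ∑ k, ∑ l : {l : Fin K // l ≠ k}, uVec D₀ X₀ k l * Z k l.1 := by
    intro Z hZ
    rw [frob_eq]
    refine Finset.sum_congr rfl fun k _ => ?_
    rw [sum_ne_eq k (fun l => Z k l * Umatrix D₀ X₀ k l) (by simp [hZ k])]
    refine Finset.sum_congr rfl fun l _ => ?_
    rw [Umatrix_apply_ne D₀ X₀ k l]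
    ring
  have key2 : ∀ Z : Matrix (Fin K) (Fin K) ℝ,
      l1OnZeros X₀ (Z * X₀) =
        ∑ k, ∑ n ∈ Finset.univ.filter fun n => X₀ k n = 0,
          |∑ l : {l : Fin K // l ≠ k}, X₀ l.1 n * Z k l.1| := by
    intro Z
    unfold l1OnZeros
    refine Finset.sum_congr rfl fun k _ => ?_
    rw [Finset.sum_filter]
    refine Finset.sum_congr rfl fun n _ => ?_
    split_ifs with h
    · congr 1
      rw [Matrix.mul_apply,
        sum_ne_eq k (fun l => Z k l * X₀ l n) (by simp [h])]
      exact Finset.sum_congr rfl fun l _ => mul_comm _ _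
    · rfl
  constructor
  · intro H k z
    set Z : Matrix (Fin K) (Fin K) ℝ :=
      Matrix.of fun k' l => if h : k' = k ∧ l ≠ k then z ⟨l, h.2⟩ else 0 with hZdef
    have hZ : ∀ k', Z k' k' = 0 := by
      intro k'
      simp only [hZdef, Matrix.of_apply]
      rw [dif_neg]
      rintro ⟨rfl, h2⟩; exact h2 rfl
    have h1 := H Z hZ
    rw [key1 Z hZ, key2 Z] at h1
    have e0 : ∀ k' : Fin K, k' ≠ k → ∀ l : Fin K, Z k' l = 0 := by
      intro k' hk' l
      simp only [hZdef, Matrix.of_apply]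
      rw [dif_neg]
      rintro ⟨rfl, _⟩; exact hk' rfl
    have hZk : ∀ l : {l : Fin K // l ≠ k}, Z k l.1 = z l := fun l => dif_pos ⟨rfl, l.2⟩
    have e1 : (∑ k', ∑ l : {l : Fin K // l ≠ k'}, uVec D₀ X₀ k' l * Z k' l.1)
        = ∑ l : {l : Fin K // l ≠ k}, uVec D₀ X₀ k l * z l := by
      rw [Finset.sum_eq_single k]
      · refine Finset.sum_congr rfl fun l _ => ?_
        congr 1
        exact hZk l
      · intro k' _ hk'
        exact Finset.sum_eq_zero fun l _ => by rw [e0 k' hk' l.1, mul_zero]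
      · intro h; exact absurd (Finset.mem_univ k) h
    have e2 : (∑ k', ∑ n ∈ Finset.univ.filter fun n => X₀ k' n = 0,
          |∑ l : {l : Fin K // l ≠ k'}, X₀ l.1 n * Z k' l.1|)
        = ∑ n ∈ Finset.univ.filter fun n => X₀ k n = 0,
            |∑ l : {l : Fin K // l ≠ k}, X₀ l.1 n * z l| := by
      rw [Finset.sum_eq_single k]
      · refine Finset.sum_congr rfl fun n _ => ?_
        congr 1
        refine Finset.sum_congr rfl fun l _ => ?_
        congr 1
        exact hZk l
      · intro k' _ hk'
        refine Finset.sum_eq_zero fun n _ => ?_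
        rw [Finset.sum_eq_zero fun l _ => by rw [e0 k' hk' l.1, mul_zero], abs_zero]
      · intro h; exact absurd (Finset.mem_univ k) h
    rwa [e1, e2] at h1
  · intro H Z hZ
    rw [key1 Z hZ, key2 Z, Finset.mul_sum]
    calc |∑ k, ∑ l : {l : Fin K // l ≠ k}, uVec D₀ X₀ k l * Z k l.1|
        ≤ ∑ k, |∑ l : {l : Fin K // l ≠ k}, uVec D₀ X₀ k l * Z k l.1| :=
          Finset.abs_sum_le_sum_abs _ _
      _ ≤ ∑ k, c * ∑ n ∈ Finset.univ.filter fun n => X₀ k n = 0,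
            |∑ l : {l : Fin K // l ≠ k}, X₀ l.1 n * Z k l.1| :=
          Finset.sum_le_sum fun k _ => H k (fun l => Z k l.1)
end
end

section
/- Let A be an n×M real matrix, let 1 ≤ p, p' ≤ ∞ with 1/p + 1/p' = 1, let Q^M := [−1,1]^M ⊆ ℝ^M be the unit hypercube, and define R_p(A) := inf_{z ∈ ℝⁿ, z ≠ 0} ‖Aᵀz‖₁/‖z‖_{p'}. Then for every r ≥ 0, the closed ℓ_p-ball {v ∈ ℝⁿ : ‖v‖_p ≤ r} is contained in the image A·Q^M := {A·d : d ∈ Q^M} if and only if r ≤ R_p(A). In particular, R_p(A) is the radius of the largest ℓ_p-ball included in A·Q^M. -/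
/-!
A linear functional `z ⬝ᵥ ·` has maximum `r ‖z‖_{p'}` on the `ℓ_p`-ball of radius `r` (Hölder's
inequality, with equality at the normalised vector `sign zᵢ |zᵢ|^(p'-1)`) and maximum `‖Aᵀz‖₁` on
`A·Q^M` (attained at `d = sign (Aᵀz)`). As `A·Q^M` is compact and convex, Hahn–Banach makes it the
intersection of the half-spaces containing it, so the ball lies inside exactly when
`r ‖z‖_{p'} ≤ ‖Aᵀz‖₁` for every `z`, i.e. when `r ≤ R_p(A)`.
-/

open Matrix Finset
open scoped ENNReal

noncomputable section

/-- The ℓ_p norm of a finitely indexed real vector, `1 ≤ p ≤ ∞`. -/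
def lpNorm (p : ℝ≥0∞) [Fact (1 ≤ p)] {ι : Type*} [Fintype ι] (v : ι → ℝ) : ℝ :=
  ‖(WithLp.equiv p (∀ _ : ι, ℝ)).symm v‖

section LpNorm

variable {ι : Type*} [Fintype ι] {p q : ℝ≥0∞} [Fact (1 ≤ p)] [Fact (1 ≤ q)]

lemma lpNorm_nonneg (v : ι → ℝ) : 0 ≤ lpNorm p v := norm_nonneg _

@[simp] lemma lpNorm_zero : lpNorm p (0 : ι → ℝ) = 0 := by simp [lpNorm]

lemma lpNorm_pos {v : ι → ℝ} (hv : v ≠ 0) : 0 < lpNorm p v :=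
  norm_pos_iff.mpr fun h => hv (by simpa using congrArg (WithLp.equiv p _) h)

lemma lpNorm_smul (c : ℝ) (v : ι → ℝ) : lpNorm p (c • v) = |c| * lpNorm p v :=
  norm_smul c ((WithLp.equiv p (∀ _ : ι, ℝ)).symm v)

lemma abs_le_lpNorm (v : ι → ℝ) (i : ι) : |v i| ≤ lpNorm p v :=
  PiLp.norm_apply_le ((WithLp.equiv p (∀ _ : ι, ℝ)).symm v) i

lemma lpNorm_eq_sum (hp : p ≠ ∞) (v : ι → ℝ) :
    lpNorm p v = (∑ i, |v i| ^ p.toReal) ^ (1 / p.toReal) :=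
  PiLp.norm_eq_sum (ENNReal.toReal_pos (zero_lt_one.trans_le Fact.out).ne' hp) _

lemma lpNorm_rpow_eq_sum (hp : p ≠ ∞) (v : ι → ℝ) :
    lpNorm p v ^ p.toReal = ∑ i, |v i| ^ p.toReal := by
  have hp0 : 0 < p.toReal := ENNReal.toReal_pos (zero_lt_one.trans_le Fact.out).ne' hp
  rw [lpNorm_eq_sum hp, one_div, Real.rpow_inv_rpow (by positivity) hp0.ne']

lemma lpNorm_one (v : ι → ℝ) : lpNorm 1 v = ∑ i, |v i| := by
  simpa using lpNorm_eq_sum (p := 1) ENNReal.one_ne_top v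

lemma lpNorm_top_le {v : ι → ℝ} {c : ℝ} (hc : 0 ≤ c) (hv : ∀ i, |v i| ≤ c) :
    lpNorm ∞ v ≤ c := by
  rw [lpNorm, PiLp.norm_eq_ciSup]
  exact Real.iSup_le hv hc

lemma lpNorm_top_le_one_iff {v : ι → ℝ} : lpNorm ∞ v ≤ 1 ↔ ∀ i, |v i| ≤ 1 :=
  ⟨fun h i => (abs_le_lpNorm v i).trans h, lpNorm_top_le zero_le_one⟩

lemma dotProduct_le_lpNorm_one_mul_lpNorm_top (z v : ι → ℝ) :
    z ⬝ᵥ v ≤ lpNorm 1 z * lpNorm ∞ v := by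
  rw [lpNorm_one, Finset.sum_mul]
  refine Finset.sum_le_sum fun i _ => ?_
  calc z i * v i ≤ |z i| * |v i| := (le_abs_self _).trans_eq (abs_mul _ _)
    _ ≤ |z i| * lpNorm ∞ v := by gcongr; exact abs_le_lpNorm v i

lemma dotProduct_le_lpNorm_mul_lpNorm [p.HolderConjugate q] (z v : ι → ℝ) :
    z ⬝ᵥ v ≤ lpNorm q z * lpNorm p v := by
  by_cases hp : p = ∞
  · obtain rfl : q = 1 := (ENNReal.HolderConjugate.eq_top_iff_eq_one p q).mp hp
    subst hp
    exact dotProduct_le_lpNorm_one_mul_lpNorm_top z v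
  by_cases hq : q = ∞
  · obtain rfl : p = 1 := (ENNReal.HolderConjugate.eq_top_iff_eq_one q p).mp hq
    subst hq
    rw [dotProduct_comm, mul_comm]
    exact dotProduct_le_lpNorm_one_mul_lpNorm_top v z
  rw [lpNorm_eq_sum hp, lpNorm_eq_sum hq]
  exact Real.inner_le_Lp_mul_Lq univ z v (ENNReal.HolderConjugate.toReal_of_ne_top hq hp)

lemma exists_lpNorm_top_le_one_lpNorm_one_le (z : ι → ℝ) :
    ∃ v, lpNorm ∞ v ≤ 1 ∧ lpNorm 1 z ≤ z ⬝ᵥ v :=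
  ⟨fun i => SignType.sign (z i),
    lpNorm_top_le zero_le_one fun i => by cases SignType.sign (z i) <;> simp,
    by simp [lpNorm_one, dotProduct]⟩

lemma exists_lpNorm_one_le_one_lpNorm_top_le [Nonempty ι] (z : ι → ℝ) :
    ∃ v, lpNorm 1 v ≤ 1 ∧ lpNorm ∞ z ≤ z ⬝ᵥ v := by
  classical
  obtain ⟨i, hi⟩ := Finite.exists_max (|z ·|)
  refine ⟨Pi.single i (SignType.sign (z i)), ?_, ?_⟩
  · rw [lpNorm_one]
    simp only [Pi.single_apply, apply_ite, abs_zero, sum_ite_eq', mem_univ, if_true]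
    cases SignType.sign (z i) <;> simp
  · rw [dotProduct_single, self_mul_sign]
    exact lpNorm_top_le (abs_nonneg _) hi

lemma exists_lpNorm_le_one_lpNorm_le_of_ne_top [p.HolderConjugate q] (hp : p ≠ ∞)
    (hq : q ≠ ∞) (z : ι → ℝ) : ∃ v, lpNorm p v ≤ 1 ∧ lpNorm q z ≤ z ⬝ᵥ v := by
  rcases eq_or_ne z 0 with rfl | hz
  · exact ⟨0, by simp, by simp⟩
  have hpq' := ENNReal.HolderConjugate.toReal_of_ne_top hp hq
  set C := lpNorm q z
  have hC : 0 < C := lpNorm_pos hz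
  set w : ι → ℝ := fun i => SignType.sign (z i) * |z i| ^ (q.toReal - 1)
  have hzw : z ⬝ᵥ w = C ^ q.toReal := by
    rw [lpNorm_rpow_eq_sum hq]
    refine sum_congr rfl fun i _ => ?_
    rw [← mul_assoc, self_mul_sign,
      ← Real.rpow_one_add' (abs_nonneg _) (by simp [hpq'.symm.ne_zero]), add_sub_cancel]
  have hw : lpNorm p w = C ^ (q.toReal - 1) := by
    rw [← Real.rpow_left_inj (lpNorm_nonneg _) (by positivity) hpq'.ne_zero,
      lpNorm_rpow_eq_sum hp, ← Real.rpow_mul hC.le, hpq'.symm.sub_one_mul_conj,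
      lpNorm_rpow_eq_sum hq]
    refine sum_congr rfl fun i _ => ?_
    rcases eq_or_ne (z i) 0 with h | h
    · simp [w, h, Real.zero_rpow hpq'.ne_zero, Real.zero_rpow hpq'.symm.ne_zero]
    have hsign : |(SignType.sign (z i) : ℝ)| = 1 := by rcases h.lt_or_gt with h | h <;> simp [h]
    rw [abs_mul, hsign, one_mul, abs_of_nonneg (by positivity), ← Real.rpow_mul (abs_nonneg _),
      hpq'.symm.sub_one_mul_conj]
  refine ⟨(C ^ (q.toReal - 1))⁻¹ • w, ?_, ?_⟩
  · rw [lpNorm_smul, hw, abs_inv, abs_of_pos (by positivity), inv_mul_cancel₀ (by positivity)]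
  · rw [dotProduct_smul, hzw, smul_eq_mul, ← div_eq_inv_mul, ← Real.rpow_sub hC, sub_sub_cancel,
      Real.rpow_one]

lemma exists_lpNorm_le_one_lpNorm_le [Nonempty ι] [p.HolderConjugate q] (z : ι → ℝ) :
    ∃ v, lpNorm p v ≤ 1 ∧ lpNorm q z ≤ z ⬝ᵥ v := by
  by_cases hp : p = ∞
  · obtain rfl : q = 1 := (ENNReal.HolderConjugate.eq_top_iff_eq_one p q).mp hp
    subst hp
    exact exists_lpNorm_top_le_one_lpNorm_one_le z
  by_cases hq : q = ∞
  · obtain rfl : p = 1 := (ENNReal.HolderConjugate.eq_top_iff_eq_one q p).mp hq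
    subst hq
    exact exists_lpNorm_one_le_one_lpNorm_top_le z
  exact exists_lpNorm_le_one_lpNorm_le_of_ne_top hp hq z

lemma le_iInf_div_lpNorm_iff [Nonempty ι] {g : (ι → ℝ) → ℝ} (hg : ∀ z, 0 ≤ g z) {r : ℝ} :
    r ≤ ⨅ z : {z : ι → ℝ // z ≠ 0}, g z.1 / lpNorm q z.1 ↔ ∀ z, r * lpNorm q z ≤ g z := by
  have : Nonempty {z : ι → ℝ // z ≠ 0} := ⟨⟨1, one_ne_zero⟩⟩
  have hbdd : BddBelow (Set.range fun z : {z : ι → ℝ // z ≠ 0} => g z.1 / lpNorm q z.1) :=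
    ⟨0, by rintro _ ⟨z, rfl⟩; exact div_nonneg (hg _) (lpNorm_nonneg _)⟩
  constructor
  · intro h z
    rcases eq_or_ne z 0 with rfl | hz
    · simpa using hg 0
    exact (le_div_iff₀ (lpNorm_pos hz)).mp (h.trans (ciInf_le hbdd ⟨z, hz⟩))
  · exact fun h => le_ciInf fun z => (le_div_iff₀ (lpNorm_pos z.2)).mpr (h z)

end LpNorm

lemma exists_eq_dotProduct {ι : Type*} [Fintype ι] [DecidableEq ι] (f : (ι → ℝ) →L[ℝ] ℝ) :
    ∃ z : ι → ℝ, ∀ x, f x = z ⬝ᵥ x :=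
  ⟨(dotProductEquiv ℝ ι).symm f.toLinearMap, fun x =>
    (LinearMap.congr_fun ((dotProductEquiv ℝ ι).apply_symm_apply f.toLinearMap) x).symm⟩

lemma setOf_forall_abs_le_one_eq_closedBall {κ : Type*} [Fintype κ] :
    {d : κ → ℝ | ∀ j, |d j| ≤ 1} = Metric.closedBall 0 1 := by
  ext d
  simp [pi_norm_le_iff_of_nonneg]

theorem setOf_lpNorm_le_subset_mulVec_image_iff {ι κ : Type*} [Fintype ι] [Fintype κ]
    [Nonempty ι] {p q : ℝ≥0∞} [Fact (1 ≤ p)] [Fact (1 ≤ q)] [p.HolderConjugate q]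
    (A : Matrix ι κ ℝ) {r : ℝ} (hr : 0 ≤ r) :
    {v : ι → ℝ | lpNorm p v ≤ r} ⊆ (fun d => A.mulVec d) '' {d : κ → ℝ | ∀ j, |d j| ≤ 1} ↔
      ∀ z, r * lpNorm q z ≤ lpNorm 1 (Aᵀ.mulVec z) := by
  classical
  constructor
  · intro h z
    obtain ⟨v, hv, hzv⟩ := exists_lpNorm_le_one_lpNorm_le (p := p) (q := q) z
    obtain ⟨d, hd, hAd⟩ := h (show lpNorm p (r • v) ≤ r by
      rw [lpNorm_smul, abs_of_nonneg hr]; exact mul_le_of_le_one_right hr hv)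
    calc r * lpNorm q z ≤ z ⬝ᵥ (r • v) := by rw [dotProduct_smul, smul_eq_mul]; gcongr
      _ = Aᵀ.mulVec z ⬝ᵥ d := by rw [← hAd, dotProduct_mulVec, mulVec_transpose]
      _ ≤ lpNorm 1 (Aᵀ.mulVec z) * lpNorm ∞ d := dotProduct_le_lpNorm_one_mul_lpNorm_top _ _
      _ ≤ lpNorm 1 (Aᵀ.mulVec z) :=
          mul_le_of_le_one_right (lpNorm_nonneg _) (lpNorm_top_le_one_iff.mpr hd)
  · intro h v hv
    have hS : (fun d => A.mulVec d) '' {d : κ → ℝ | ∀ j, |d j| ≤ 1}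
        = A.mulVecLin '' Metric.closedBall 0 1 := by
      rw [setOf_forall_abs_le_one_eq_closedBall]; rfl
    have hconv := (convex_closedBall (0 : κ → ℝ) 1).linear_image A.mulVecLin
    have hclosed := ((isCompact_closedBall (0 : κ → ℝ) 1).image
      A.mulVecLin.continuous_of_finiteDimensional).isClosed
    rw [hS, ← iInter_halfSpaces_eq hconv hclosed, Set.mem_iInter]
    intro f
    obtain ⟨z, hf⟩ := exists_eq_dotProduct f
    obtain ⟨d, hd, hzd⟩ := exists_lpNorm_top_le_one_lpNorm_one_le (Aᵀ.mulVec z)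
    refine ⟨A.mulVec d, ⟨d, ?_, rfl⟩, ?_⟩
    · rw [← setOf_forall_abs_le_one_eq_closedBall]; exact lpNorm_top_le_one_iff.mp hd
    rw [hf, hf]
    calc z ⬝ᵥ v ≤ lpNorm q z * lpNorm p v := dotProduct_le_lpNorm_mul_lpNorm z v
      _ ≤ r * lpNorm q z := by rw [mul_comm]; exact mul_le_mul_of_nonneg_right hv (lpNorm_nonneg _)
      _ ≤ lpNorm 1 (Aᵀ.mulVec z) := h z
      _ ≤ z ⬝ᵥ A.mulVec d := hzd.trans_eq (by rw [dotProduct_mulVec, mulVec_transpose])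

/-- **Lemma (inscribed ball radius).** For an `n×M` matrix `A` and conjugate exponents
`p, p'`, the closed `ℓ_p`-ball of radius `r ≥ 0` is contained in the image `A·Q^M` of
the unit hypercube `Q^M = [−1,1]^M` if and only if
`r ≤ R_p(A) := inf_{z≠0} ‖Aᵀz‖₁/‖z‖_{p'}`; i.e. `R_p(A)` is the radius of the largest
`ℓ_p`-ball included in `A·Q^M`. -/
theorem stmt11 {n M : ℕ} (hn : 0 < n) (A : Matrix (Fin n) (Fin M) ℝ)
    (p p' : ℝ≥0∞) [Fact (1 ≤ p)] [Fact (1 ≤ p')] (hconj : 1 / p + 1 / p' = 1)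
    (r : ℝ) (hr : 0 ≤ r) :
    {v : Fin n → ℝ | lpNorm p v ≤ r} ⊆
        (fun d => A.mulVec d) '' {d : Fin M → ℝ | ∀ j, |d j| ≤ 1} ↔
      r ≤ ⨅ z : {z : Fin n → ℝ // z ≠ 0},
        (∑ j, |Aᵀ.mulVec z.1 j|) / lpNorm p' z.1 := by
  have : Nonempty (Fin n) := ⟨⟨0, hn⟩⟩
  have : p.HolderConjugate p' := ENNReal.holderConjugate_iff.mpr (by simpa [one_div] using hconj)
  rw [setOf_lpNorm_le_subset_mulVec_image_iff (q := p') A hr,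
    le_iInf_div_lpNorm_iff fun z => sum_nonneg fun j _ => abs_nonneg _]
  simp only [lpNorm_one]
end
end
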